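/- arXiv:2512.05786 — 3 statements merged into one kernel-verified Lean document; each statement's English description precedes it below -/
import Mathlib

section
/- For integers k ≥ 2 and 0 ≤ j ≤ k, the coefficient -k + 2j + 1 vanishes if and only if k is odd and j = (k-1)/2. Consequently, for even k the homological operator L_B restricted to degree-k S-equivariant homogeneous vector fields (as in the saddle normal form construction) is surjective onto the space of degree-k S-reversible homogeneous vector fields. -/
/-! On the monomial `ξ ^ (k - j) * η ^ j` the Euler operators `ξ ∂_ξ` and `η ∂_η` act by the
scalars `k - j` and `j`, so `L_B` acts on the `j`-th coefficient of `p` by multiplication with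
`-k + 2j + 1` (and on the swapped component by its negative). For even `k` this never vanishes,
so `b j = -a j / (-k + 2j + 1)` solves `L_B h^k = X^k`. -/

open Finset

section EulerOperator

variable {ι 𝕜 : Type*} [NontriviallyNormedField 𝕜]

theorem mul_deriv_sum_mul_pow_mul (s : Finset ι) (c d : ι → 𝕜) (m : ι → ℕ) (x : 𝕜) :
    x * deriv (fun t => ∑ i ∈ s, c i * t ^ m i * d i) x = ∑ i ∈ s, m i * (c i * x ^ m i * d i) := by
  have hderiv : HasDerivAt (fun t => ∑ i ∈ s, c i * t ^ m i * d i)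
      (∑ i ∈ s, c i * (m i * x ^ (m i - 1)) * d i) x :=
    HasDerivAt.fun_sum fun i _ => ((hasDerivAt_pow (m i) x).const_mul (c i)).mul_const (d i)
  rw [hderiv.deriv, mul_sum]
  refine sum_congr rfl fun i _ => ?_
  rcases (m i).eq_zero_or_pos with h | h
  · simp [h]
  · rw [← mul_pow_sub_one h.ne' x]
    ring

theorem mul_deriv_sum_mul_pow (s : Finset ι) (c : ι → 𝕜) (m : ι → ℕ) (x : 𝕜) :
    x * deriv (fun t => ∑ i ∈ s, c i * t ^ m i) x = ∑ i ∈ s, m i * (c i * x ^ m i) := by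
  simpa using mul_deriv_sum_mul_pow_mul s c 1 m x

end EulerOperator

theorem neg_add_two_mul_add_one_eq_zero_iff (k j : ℕ) :
    -(k : ℤ) + 2 * j + 1 = 0 ↔ Odd k ∧ j = (k - 1) / 2 := by
  rw [Nat.odd_iff]
  omega

theorem neg_add_two_mul_add_one_ne_zero_of_even {k : ℕ} (hk : Even k) (j : ℕ) :
    -(k : ℝ) + 2 * j + 1 ≠ 0 := by
  have h : -(k : ℤ) + 2 * j + 1 ≠ 0 := fun h =>
    Nat.not_odd_iff_even.mpr hk ((neg_add_two_mul_add_one_eq_zero_iff k j).mp h).1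
  exact_mod_cast h

theorem stmt8 :
    (∀ k : ℕ, 2 ≤ k → ∀ j : ℕ, j ≤ k →
      ((-(k : ℤ) + 2 * j + 1 = 0) ↔ (Odd k ∧ j = (k - 1) / 2))) ∧
    (∀ k : ℕ, 2 ≤ k → Even k →
      ∀ a : ℕ → ℝ, ∃ b : ℕ → ℝ,
        ∀ ξ η : ℝ,
          -- p(ξ,η) = Σ b j ξ^(k-j) η^j, h^k = (p(ξ,η), p(η,ξ)),
          -- q(ξ,η) = Σ a j ξ^(k-j) η^j, X^k = (-q(ξ,η), q(η,ξ)),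
          -- L_B h^k = X^k componentwise, with B(ξ,η) = (-ξ, η)
          ((-ξ) * deriv (fun t => ∑ j ∈ range (k + 1), b j * t ^ (k - j) * η ^ j) ξ
            + η * deriv (fun t => ∑ j ∈ range (k + 1), b j * ξ ^ (k - j) * t ^ j) η
            + (∑ j ∈ range (k + 1), b j * ξ ^ (k - j) * η ^ j)
            = -(∑ j ∈ range (k + 1), a j * ξ ^ (k - j) * η ^ j)) ∧
          ((-ξ) * deriv (fun t => ∑ j ∈ range (k + 1), b j * η ^ (k - j) * t ^ j) ξ
            + η * deriv (fun t => ∑ j ∈ range (k + 1), b j * t ^ (k - j) * ξ ^ j) η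
            - (∑ j ∈ range (k + 1), b j * η ^ (k - j) * ξ ^ j)
            = ∑ j ∈ range (k + 1), a j * η ^ (k - j) * ξ ^ j)) := by
  refine ⟨fun k _ j _ => neg_add_two_mul_add_one_eq_zero_iff k j, fun k _ hk a =>
    ⟨fun j => -a j / (-(k : ℝ) + 2 * j + 1), fun ξ η => ⟨?_, ?_⟩⟩⟩
  · rw [neg_mul, mul_deriv_sum_mul_pow_mul, mul_deriv_sum_mul_pow, ← sum_neg_distrib,
      ← sum_neg_distrib, ← sum_add_distrib, ← sum_add_distrib]
    refine sum_congr rfl fun j hj => ?_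
    rw [Nat.cast_sub (Nat.lt_succ_iff.mp (mem_range.mp hj))]
    linear_combination ξ ^ (k - j) * η ^ j *
      div_mul_cancel₀ (-a j) (neg_add_two_mul_add_one_ne_zero_of_even hk j)
  · rw [neg_mul, mul_deriv_sum_mul_pow, mul_deriv_sum_mul_pow_mul, ← sum_neg_distrib,
      ← sum_add_distrib, ← sum_sub_distrib]
    refine sum_congr rfl fun j hj => ?_
    rw [Nat.cast_sub (Nat.lt_succ_iff.mp (mem_range.mp hj))]
    linear_combination -η ^ (k - j) * ξ ^ j *
      div_mul_cancel₀ (-a j) (neg_add_two_mul_add_one_ne_zero_of_even hk j)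
end

section
/- For every degree-2 homogeneous vector field of the form X²(ξ,η) = (-a₂₀ξ² - a₁₁ξη - a₀₂η², a₀₂ξ² + a₁₁ξη + a₂₀η²), there is a unique homogeneous vector field h²(ξ,η) = (b₂₀ξ² + b₁₁ξη + b₀₂η², b₀₂ξ² + b₁₁ξη + b₂₀η²) with Dh²·B - B·h² = X², and its coefficients are b₂₀ = a₂₀, b₁₁ = -a₁₁, b₀₂ = -a₀₂/3. -/
/-!
With `B = diag(-1, 1)`, the operator `h ↦ Dh·B - B·h` is diagonal on monomial fields: it sends
`ξ^i η^j e₁` to `(j - i + 1) ξ^i η^j e₁` and `ξ^i η^j e₂` to `(j - i - 1) ξ^i η^j e₂`. On the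
quadratic monomials of the first component the eigenvalues are `-1, 1, 3`, all nonzero, so the first
component alone determines `b₂₀ = a₂₀`, `b₁₁ = -a₁₁`, `b₀₂ = -a₀₂/3`; the second component is the
`S`-mirror image of the first and is then satisfied as well.
-/

theorem deriv_quadratic_left (a b c d x : ℝ) :
    deriv (fun t => a * t ^ 2 + b * t * c + d) x = 2 * a * x + b * c := by
  have h : HasDerivAt (fun t => a * t ^ 2 + b * t * c + d) (a * (2 * x ^ 1) + b * 1 * c) x :=
    (((hasDerivAt_pow 2 x).const_mul a).add
      (((hasDerivAt_id x).const_mul b).mul_const c)).add_const d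
  rw [h.deriv]
  ring

theorem deriv_quadratic_right (a b d x : ℝ) :
    deriv (fun t => d + b * t + a * t ^ 2) x = b + 2 * a * x := by
  have h : HasDerivAt (fun t => d + b * t + a * t ^ 2) (b * 1 + a * (2 * x ^ 1)) x :=
    (((hasDerivAt_id x).const_mul b).const_add d).add ((hasDerivAt_pow 2 x).const_mul a)
  rw [h.deriv]
  ring

theorem quadratic_form_eq_iff {p q r p' q' r' : ℝ} :
    (∀ ξ η : ℝ, p * ξ ^ 2 + q * ξ * η + r * η ^ 2 = p' * ξ ^ 2 + q' * ξ * η + r' * η ^ 2) ↔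
      p = p' ∧ q = q' ∧ r = r' := by
  constructor
  · intro h
    have h10 := h 1 0
    have h01 := h 0 1
    have h11 := h 1 1
    norm_num at h10 h01 h11
    exact ⟨h10, by linarith, h01⟩
  · rintro ⟨rfl, rfl, rfl⟩ _ _
    rfl

theorem homological_fst (b20 b11 b02 ξ η : ℝ) :
    (-ξ) * deriv (fun t => b20 * t ^ 2 + b11 * t * η + b02 * η ^ 2) ξ
        + η * deriv (fun t => b20 * ξ ^ 2 + b11 * ξ * t + b02 * t ^ 2) η
        + (b20 * ξ ^ 2 + b11 * ξ * η + b02 * η ^ 2)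
      = -b20 * ξ ^ 2 + b11 * ξ * η + 3 * b02 * η ^ 2 := by
  rw [deriv_quadratic_left, deriv_quadratic_right]
  ring

theorem homological_snd (b20 b11 b02 ξ η : ℝ) :
    (-ξ) * deriv (fun t => b02 * t ^ 2 + b11 * t * η + b20 * η ^ 2) ξ
        + η * deriv (fun t => b02 * ξ ^ 2 + b11 * ξ * t + b20 * t ^ 2) η
        - (b02 * ξ ^ 2 + b11 * ξ * η + b20 * η ^ 2)
      = -3 * b02 * ξ ^ 2 - b11 * ξ * η + b20 * η ^ 2 := by
  rw [deriv_quadratic_left, deriv_quadratic_right]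
  ring

def HomologicalEq (a20 a11 a02 b20 b11 b02 : ℝ) : Prop :=
  ∀ ξ η : ℝ,
    ((-ξ) * deriv (fun t => b20 * t ^ 2 + b11 * t * η + b02 * η ^ 2) ξ
      + η * deriv (fun t => b20 * ξ ^ 2 + b11 * ξ * t + b02 * t ^ 2) η
      + (b20 * ξ ^ 2 + b11 * ξ * η + b02 * η ^ 2)
      = -(a20 * ξ ^ 2) - a11 * ξ * η - a02 * η ^ 2) ∧
    ((-ξ) * deriv (fun t => b02 * t ^ 2 + b11 * t * η + b20 * η ^ 2) ξ
      + η * deriv (fun t => b02 * ξ ^ 2 + b11 * ξ * t + b20 * t ^ 2) η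
      - (b02 * ξ ^ 2 + b11 * ξ * η + b20 * η ^ 2)
      = a02 * ξ ^ 2 + a11 * ξ * η + a20 * η ^ 2)

theorem homologicalEq_iff {a20 a11 a02 b20 b11 b02 : ℝ} :
    HomologicalEq a20 a11 a02 b20 b11 b02 ↔ b20 = a20 ∧ b11 = -a11 ∧ b02 = -(a02 / 3) := by
  simp only [HomologicalEq, homological_fst, homological_snd]
  constructor
  · intro h
    obtain ⟨h20, h11, h02⟩ := quadratic_form_eq_iff.1 fun ξ η =>
      (h ξ η).1.trans (by ring : _ = -a20 * ξ ^ 2 + -a11 * ξ * η + -a02 * η ^ 2)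
    exact ⟨by linarith, h11, by linarith⟩
  · rintro ⟨rfl, rfl, rfl⟩ ξ η
    constructor <;> ring

theorem stmt9 (a20 a11 a02 : ℝ) :
    letI eqn : ℝ → ℝ → ℝ → Prop := fun b20 b11 b02 =>
      ∀ ξ η : ℝ,
        -- first component of Dh²·B - B·h² = X², with B(ξ,η) = (-ξ,η)
        ((-ξ) * deriv (fun t => b20 * t ^ 2 + b11 * t * η + b02 * η ^ 2) ξ
          + η * deriv (fun t => b20 * ξ ^ 2 + b11 * ξ * t + b02 * t ^ 2) η
          + (b20 * ξ ^ 2 + b11 * ξ * η + b02 * η ^ 2)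
          = -(a20 * ξ ^ 2) - a11 * ξ * η - a02 * η ^ 2) ∧
        -- second component
        ((-ξ) * deriv (fun t => b02 * t ^ 2 + b11 * t * η + b20 * η ^ 2) ξ
          + η * deriv (fun t => b02 * ξ ^ 2 + b11 * ξ * t + b20 * t ^ 2) η
          - (b02 * ξ ^ 2 + b11 * ξ * η + b20 * η ^ 2)
          = a02 * ξ ^ 2 + a11 * ξ * η + a20 * η ^ 2)
    (∃! b : ℝ × ℝ × ℝ, eqn b.1 b.2.1 b.2.2) ∧
      eqn a20 (-a11) (-(a02 / 3)) ∧
      (∀ b20 b11 b02, eqn b20 b11 b02 →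
        b20 = a20 ∧ b11 = -a11 ∧ b02 = -(a02 / 3)) := by
  show (∃! b : ℝ × ℝ × ℝ, HomologicalEq a20 a11 a02 b.1 b.2.1 b.2.2) ∧
    HomologicalEq a20 a11 a02 a20 (-a11) (-(a02 / 3)) ∧
    ∀ b20 b11 b02, HomologicalEq a20 a11 a02 b20 b11 b02 →
      b20 = a20 ∧ b11 = -a11 ∧ b02 = -(a02 / 3)
  have hsol : HomologicalEq a20 a11 a02 a20 (-a11) (-(a02 / 3)) := homologicalEq_iff.2 ⟨rfl, rfl, rfl⟩
  refine ⟨⟨(a20, -a11, -(a02 / 3)), hsol, fun b hb => ?_⟩, hsol, fun _ _ _ => homologicalEq_iff.1⟩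
  obtain ⟨h20, h11, h02⟩ := homologicalEq_iff.1 hb
  exact Prod.ext h20 (Prod.ext h11 h02)
end

section
/- Consider the homological equation Dh³·B - B·h³ = X³ in degree 3, where B(ξ,η) = (-ξ,η), X³(ξ,η) = (-a₃₀ξ³ - a₂₁ξ²η - a₁₂ξη² - a₀₃η³, a₀₃ξ³ + a₁₂ξ²η + a₂₁ξη² + a₃₀η³) and h³(ξ,η) = (b₃₀ξ³ + b₂₁ξ²η + b₁₂ξη² + b₀₃η³, b₀₃ξ³ + b₁₂ξ²η + b₂₁ξη² + b₃₀η³). The equation is solvable if and only if a₂₁ = 0, in which case b₃₀ = a₃₀/2, b₁₂ = -a₁₂/2, b₀₃ = -a₀₃/4, and b₂₁ is arbitrary. -/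
/-!
Along the linear part `B(ξ, η) = (-ξ, η)` the operator `h ↦ Dh·B - B·h` acts diagonally on
monomials, multiplying `ξ^i η^j` in the first component by `-i + j + 1` and in the second by
`-i + j - 1`. For `h³` of the given symmetric shape this kills the coefficient `b₂₁` (the
resonant monomial `ξ²η`, resp. `ξη²`) and scales `b₃₀, b₁₂, b₀₃` by `-2, 2, 4` in the first
component and by the negatives in the second, matching the sign pattern of `X³`; so comparing
coefficients of the first component already decides the equation.
-/

section CubicForm

variable {𝕜 : Type*} [NontriviallyNormedField 𝕜]

theorem deriv_binaryCubic_fst (c₃ c₂ c₁ c₀ ξ η : 𝕜) :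
    deriv (fun t => c₃ * t ^ 3 + c₂ * t ^ 2 * η + c₁ * t * η ^ 2 + c₀ * η ^ 3) ξ
      = 3 * c₃ * ξ ^ 2 + 2 * c₂ * ξ * η + c₁ * η ^ 2 := by
  have h : HasDerivAt (fun t => c₃ * t ^ 3 + c₂ * t ^ 2 * η + c₁ * t * η ^ 2 + c₀ * η ^ 3) _ ξ :=
    ((((hasDerivAt_pow 3 ξ).const_mul c₃).add
    (((hasDerivAt_pow 2 ξ).const_mul c₂).mul_const η)).add
    (((hasDerivAt_id ξ).const_mul c₁).mul_const (η ^ 2))).add (hasDerivAt_const ξ (c₀ * η ^ 3))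
  rw [h.deriv]
  ring

theorem deriv_binaryCubic_snd (c₃ c₂ c₁ c₀ ξ η : 𝕜) :
    deriv (fun t => c₃ * ξ ^ 3 + c₂ * ξ ^ 2 * t + c₁ * ξ * t ^ 2 + c₀ * t ^ 3) η
      = c₂ * ξ ^ 2 + 2 * c₁ * ξ * η + 3 * c₀ * η ^ 2 := by
  have h : HasDerivAt (fun t => c₃ * ξ ^ 3 + c₂ * ξ ^ 2 * t + c₁ * ξ * t ^ 2 + c₀ * t ^ 3) _ η :=
    (((hasDerivAt_const η (c₃ * ξ ^ 3)).add
    ((hasDerivAt_id η).const_mul (c₂ * ξ ^ 2))).add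
    ((hasDerivAt_pow 2 η).const_mul (c₁ * ξ))).add ((hasDerivAt_pow 3 η).const_mul c₀)
  rw [h.deriv]
  ring

end CubicForm

theorem binaryCubic_coeffs_eq_zero {K : Type*} [Field K] (h2 : (2 : K) ≠ 0) {c₃ c₂ c₁ c₀ : K}
    (h : ∀ ξ η : K, c₃ * ξ ^ 3 + c₂ * ξ ^ 2 * η + c₁ * ξ * η ^ 2 + c₀ * η ^ 3 = 0) :
    c₃ = 0 ∧ c₂ = 0 ∧ c₁ = 0 ∧ c₀ = 0 := by
  have h₁₀ := h 1 0
  have h₀₁ := h 0 1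
  have h_diag := h 1 1
  have h_anti := h 1 (-1)
  norm_num at h₁₀ h₀₁ h_diag h_anti
  have h2c₁ : 2 * c₁ = 0 := by linear_combination h_diag + h_anti - 2 * h₁₀
  have hc₁ : c₁ = 0 := (mul_eq_zero.mp h2c₁).resolve_left h2
  refine ⟨h₁₀, ?_, hc₁, h₀₁⟩
  linear_combination h_diag - h₁₀ - h₀₁ - hc₁

def HomologicalEqn (a₃₀ a₂₁ a₁₂ a₀₃ b₃₀ b₂₁ b₁₂ b₀₃ : ℝ) : Prop :=
  ∀ ξ η : ℝ,
    ((-ξ) * deriv (fun t => b₃₀ * t ^ 3 + b₂₁ * t ^ 2 * η + b₁₂ * t * η ^ 2 + b₀₃ * η ^ 3) ξ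
      + η * deriv (fun t => b₃₀ * ξ ^ 3 + b₂₁ * ξ ^ 2 * t + b₁₂ * ξ * t ^ 2 + b₀₃ * t ^ 3) η
      + (b₃₀ * ξ ^ 3 + b₂₁ * ξ ^ 2 * η + b₁₂ * ξ * η ^ 2 + b₀₃ * η ^ 3)
      = -(a₃₀ * ξ ^ 3) - a₂₁ * ξ ^ 2 * η - a₁₂ * ξ * η ^ 2 - a₀₃ * η ^ 3) ∧
    ((-ξ) * deriv (fun t => b₀₃ * t ^ 3 + b₁₂ * t ^ 2 * η + b₂₁ * t * η ^ 2 + b₃₀ * η ^ 3) ξ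
      + η * deriv (fun t => b₀₃ * ξ ^ 3 + b₁₂ * ξ ^ 2 * t + b₂₁ * ξ * t ^ 2 + b₃₀ * t ^ 3) η
      - (b₀₃ * ξ ^ 3 + b₁₂ * ξ ^ 2 * η + b₂₁ * ξ * η ^ 2 + b₃₀ * η ^ 3)
      = a₀₃ * ξ ^ 3 + a₁₂ * ξ ^ 2 * η + a₂₁ * ξ * η ^ 2 + a₃₀ * η ^ 3)

theorem homologicalEqn_iff {a₃₀ a₂₁ a₁₂ a₀₃ b₃₀ b₂₁ b₁₂ b₀₃ : ℝ} :
    HomologicalEqn a₃₀ a₂₁ a₁₂ a₀₃ b₃₀ b₂₁ b₁₂ b₀₃ ↔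
      a₂₁ = 0 ∧ b₃₀ = a₃₀ / 2 ∧ b₁₂ = -(a₁₂ / 2) ∧ b₀₃ = -(a₀₃ / 4) := by
  simp only [HomologicalEqn, deriv_binaryCubic_fst, deriv_binaryCubic_snd]
  constructor
  · intro h
    obtain ⟨h₃₀, h₂₁, h₁₂, h₀₃⟩ := binaryCubic_coeffs_eq_zero two_ne_zero
      (c₃ := a₃₀ - 2 * b₃₀) (c₂ := a₂₁) (c₁ := a₁₂ + 2 * b₁₂) (c₀ := a₀₃ + 4 * b₀₃)
      fun ξ η => by linear_combination (h ξ η).1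
    exact ⟨h₂₁, by linarith, by linarith, by linarith⟩
  · rintro ⟨rfl, rfl, rfl, rfl⟩ ξ η
    constructor <;> ring

theorem stmt10 (a30 a21 a12 a03 : ℝ) :
    letI eqn : ℝ → ℝ → ℝ → ℝ → Prop := fun b30 b21 b12 b03 =>
      ∀ ξ η : ℝ,
        -- first component of Dh³·B - B·h³ = X³, with B(ξ,η) = (-ξ,η)
        ((-ξ) * deriv (fun t => b30 * t ^ 3 + b21 * t ^ 2 * η + b12 * t * η ^ 2 + b03 * η ^ 3) ξ
          + η * deriv (fun t => b30 * ξ ^ 3 + b21 * ξ ^ 2 * t + b12 * ξ * t ^ 2 + b03 * t ^ 3) η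
          + (b30 * ξ ^ 3 + b21 * ξ ^ 2 * η + b12 * ξ * η ^ 2 + b03 * η ^ 3)
          = -(a30 * ξ ^ 3) - a21 * ξ ^ 2 * η - a12 * ξ * η ^ 2 - a03 * η ^ 3) ∧
        -- second component
        ((-ξ) * deriv (fun t => b03 * t ^ 3 + b12 * t ^ 2 * η + b21 * t * η ^ 2 + b30 * η ^ 3) ξ
          + η * deriv (fun t => b03 * ξ ^ 3 + b12 * ξ ^ 2 * t + b21 * ξ * t ^ 2 + b30 * t ^ 3) η
          - (b03 * ξ ^ 3 + b12 * ξ ^ 2 * η + b21 * ξ * η ^ 2 + b30 * η ^ 3)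
          = a03 * ξ ^ 3 + a12 * ξ ^ 2 * η + a21 * ξ * η ^ 2 + a30 * η ^ 3)
    ((∃ b30 b21 b12 b03 : ℝ, eqn b30 b21 b12 b03) ↔ a21 = 0) ∧
      (∀ b30 b21 b12 b03 : ℝ, eqn b30 b21 b12 b03 →
        b30 = a30 / 2 ∧ b12 = -(a12 / 2) ∧ b03 = -(a03 / 4)) ∧
      (a21 = 0 → ∀ b21 : ℝ, eqn (a30 / 2) b21 (-(a12 / 2)) (-(a03 / 4))) := by
  refine ⟨⟨fun ⟨_, _, _, _, h⟩ => (homologicalEqn_iff.mp h).1,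
      fun ha => ⟨_, 0, _, _, homologicalEqn_iff.mpr ⟨ha, rfl, rfl, rfl⟩⟩⟩,
    fun _ _ _ _ h => (homologicalEqn_iff.mp h).2,
    fun ha _ => homologicalEqn_iff.mpr ⟨ha, rfl, rfl, rfl⟩⟩
end
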